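/- Let b : Fin 6 → ℝ be the bandwidths b 0 = b 1 = 7/20, b 2 = b 3 = 9/20 and b 4 = b 5 = 1/5, and let r₁ : Fin 5 → Fin 2 be the assignment r₁ 0 = r₁ 1 = r₁ 4 = 0 and r₁ 2 = r₁ 3 = 1 of the first five flows. Then: (a) r₁ is feasible; (b) there exists a feasible assignment of all six flows; but (c) for every assignment r : Fin 5 → Fin 2 reachable from r₁ by single-flow reroute steps and every edge e : Fin 2, the extension of r that places flow 5 on edge e is not feasible. -/

import Mathlib

open Finset

/-- The load on edge `e`: the sum of the bandwidths of the flows assigned to `e`. -/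
noncomputable def load {ι : Type*} [Fintype ι] {m : ℕ} (b : ι → ℝ) (r : ι → Fin m)
    (e : Fin m) : ℝ :=
  ∑ i ∈ univ.filter (fun i => r i = e), b i

/-- An assignment is feasible if the load of every edge is at most the capacity 1. -/
def Feasible {ι : Type*} [Fintype ι] {m : ℕ} (b : ι → ℝ) (r : ι → Fin m) : Prop :=
  ∀ e, load b r e ≤ 1

/-- A single-flow reroute step: `r'` is feasible and differs from `r` at exactly one index. -/
def Step {ι : Type*} [Fintype ι] {m : ℕ} (b : ι → ℝ) (r r' : ι → Fin m) : Prop :=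
  Feasible b r' ∧ ∃! i, r' i ≠ r i

/-- `r'` is reachable from a feasible `r` by a sequence of single-flow reroute steps. -/
def Reachable {ι : Type*} [Fintype ι] {m : ℕ} (b : ι → ℝ) (r r' : ι → Fin m) : Prop :=
  Feasible b r ∧ Relation.ReflTransGen (Step b) r r'

/-- The bandwidths of the six flows. -/
noncomputable def b : Fin 6 → ℝ := ![7/20, 7/20, 9/20, 9/20, 1/5, 1/5]

/-- The bandwidths of the first five flows. -/
noncomputable def b5 : Fin 5 → ℝ := fun i => b i.castSucc

/-- The given assignment of the first five flows. -/
def r₁ : Fin 5 → Fin 2 := ![0, 0, 1, 1, 0]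

/-!
In `r₁` both edges carry load `9/10` while every flow has bandwidth at least `1/5`, so rerouting
any single flow overloads its new edge: `r₁` admits no step and is the only assignment reachable
from it. The sixth flow, of bandwidth `1/5`, then pushes either edge to `11/10`, although all six
flows fit when split as `{0, 2, 4}` and `{1, 3, 5}`, each of load exactly `1`.
-/

section Load

variable {ι : Type*} [Fintype ι] {m : ℕ}

lemma load_update_self [DecidableEq ι] (b : ι → ℝ) {r : ι → Fin m} {i : ι} {e : Fin m}
    (hi : r i ≠ e) : load b (Function.update r i e) e = load b r e + b i := by
  have hfilter : univ.filter (fun j => Function.update r i e j = e)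
      = insert i (univ.filter fun j => r j = e) := by
    ext j
    by_cases hj : j = i
    · subst hj; simp
    · simp [hj]
  rw [load, hfilter, sum_insert (by simp [hi]), add_comm, load]

lemma load_snoc_self {n : ℕ} (b : Fin (n + 1) → ℝ) (r : Fin n → Fin m) (e : Fin m) :
    load b (Fin.snoc r e) e = load (fun i => b i.castSucc) r e + b (Fin.last n) := by
  simp only [load, sum_filter, Fin.sum_univ_castSucc, Fin.snoc_castSucc, Fin.snoc_last,
    if_true]

lemma Step.exists_load_add_le {b : ι → ℝ} {r r' : ι → Fin m} (h : Step b r r') :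
    ∃ i, r' i ≠ r i ∧ load b r (r' i) + b i ≤ 1 := by
  classical
  obtain ⟨hfeas, i, hi, huniq⟩ := h
  refine ⟨i, hi, ?_⟩
  have hr' : r' = Function.update r i (r' i) :=
    Function.eq_update_iff.mpr ⟨rfl, fun j hj => not_not.mp (mt (huniq j) hj)⟩
  generalize r' i = e at hi hr' ⊢
  have := hfeas e
  rwa [hr', load_update_self b hi.symm] at this

lemma not_step_of_lt_load_add {b : ι → ℝ} {r : ι → Fin m}
    (h : ∀ i e, r i ≠ e → 1 < load b r e + b i) (r' : ι → Fin m) : ¬ Step b r r' := by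
  intro hstep
  obtain ⟨i, hi, hle⟩ := hstep.exists_load_add_le
  exact (h i (r' i) hi.symm).not_ge hle

end Load

lemma Relation.ReflTransGen.eq_of_forall_not {α : Type*} {R : α → α → Prop} {a c : α}
    (h : ∀ c, ¬ R a c) (hac : Relation.ReflTransGen R a c) : c = a := by
  rcases hac.cases_head with rfl | ⟨c', hc', -⟩
  · rfl
  · exact absurd hc' (h c')

lemma load_b5_r₁ (e : Fin 2) : load b5 r₁ e = 9 / 10 := by
  rw [load, sum_filter]
  fin_cases e <;> norm_num [Fin.sum_univ_succ, b5, b, r₁]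

lemma one_div_five_le_b5 (i : Fin 5) : 1 / 5 ≤ b5 i := by
  fin_cases i <;> norm_num [b5, b]

lemma not_step_r₁ (r' : Fin 5 → Fin 2) : ¬ Step b5 r₁ r' :=
  not_step_of_lt_load_add (fun i e _ => by linarith [load_b5_r₁ e, one_div_five_le_b5 i]) r'

lemma feasible_b_alternating : Feasible b (![0, 1, 0, 1, 0, 1] : Fin 6 → Fin 2) := by
  intro e
  rw [load, sum_filter]
  fin_cases e <;> norm_num [Fin.sum_univ_succ, b]

theorem stmt5 :
    Feasible b5 r₁ ∧
    (∃ r : Fin 6 → Fin 2, Feasible b r) ∧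
    ∀ r : Fin 5 → Fin 2, Reachable b5 r₁ r →
      ∀ e : Fin 2, ¬ Feasible b (Fin.snoc r e) := by
  refine ⟨fun e => (load_b5_r₁ e).trans_le (by norm_num), ⟨_, feasible_b_alternating⟩, ?_⟩
  rintro r ⟨-, hreach⟩ e hfeas
  obtain rfl := hreach.eq_of_forall_not not_step_r₁
  have hload : load b5 r₁ e + b (Fin.last 5) ≤ 1 :=
    (load_snoc_self b r₁ e).symm.trans_le (hfeas e)
  have hlast : b (Fin.last 5) = 1 / 5 := rfl
  linarith [load_b5_r₁ e]
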